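/- Let A and B be groups, W ⊆ F_∞ a set of words, M a normal subgroup of A, N a normal subgroup of B, and φ : A ∗ B → (A/M) ∗ (B/N) the natural homomorphism. Then φ(W(A ∗ B) ∩ [A,B]) = W((A/M) ∗ (B/N)) ∩ [A/M, B/N]. -/

import Mathlib

open Monoid
open scoped commutatorElement

/-- The verbal subgroup `W(G)`: the subgroup of `G` generated by all evaluations of the
words of `W` at tuples of elements of `G`. -/
def verbalSubgroup (W : Set (FreeGroup ℕ)) (G : Type*) [Group G] : Subgroup G :=
  Subgroup.closure {x | ∃ w ∈ W, ∃ f : ℕ → G, FreeGroup.lift f w = x}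

/-- The subgroup `[A,B]` of the free product `A ∗ B` generated by the commutators
`[a,b] = a * b * a⁻¹ * b⁻¹` with `a ∈ A`, `b ∈ B`. -/
def commSubgroup (A B : Type*) [Group A] [Group B] : Subgroup (Coprod A B) :=
  Subgroup.closure {x | ∃ (a : A) (b : B), x = ⁅(Coprod.inl a : Coprod A B), Coprod.inr b⁆}

/-! Both `[A,B]` and `[A/M, B/N]` are kernels of the canonical maps `A ∗ B → A × B`, so the
inclusion `⊆` holds for any pair of homomorphisms. For `⊇`, verbal subgroups are fully invariant and
surjections map them onto verbal subgroups, so an element of the right-hand side lifts to some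
`y ∈ W(A ∗ B)`. If `(a, b)` is the image of `y` in `A × B`, then `a ∈ W(A) ∩ M` and `b ∈ W(B) ∩ N`,
so `(a * b)⁻¹ * y` is a preimage that lies in `W(A ∗ B) ∩ [A,B]`. -/

theorem MonoidHom.apply_freeGroupLift {α G H : Type*} [Group G] [Group H] (f : G →* H)
    (g : α → G) (w : FreeGroup α) : f (FreeGroup.lift g w) = FreeGroup.lift (f ∘ g) w :=
  FreeGroup.lift_unique (f := f ∘ g) (f.comp (FreeGroup.lift g)) fun _ ↦ by simp

section Verbal

variable {G H : Type*} [Group G] [Group H] (W : Set (FreeGroup ℕ))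

theorem map_verbalSubgroup_le (f : G →* H) :
    (verbalSubgroup W G).map f ≤ verbalSubgroup W H := by
  rw [verbalSubgroup, MonoidHom.map_closure]
  refine Subgroup.closure_mono ?_
  rintro _ ⟨_, ⟨w, hw, g, rfl⟩, rfl⟩
  exact ⟨w, hw, f ∘ g, (f.apply_freeGroupLift g w).symm⟩

theorem map_verbalSubgroup {f : G →* H} (hf : Function.Surjective f) :
    (verbalSubgroup W G).map f = verbalSubgroup W H := by
  refine le_antisymm (map_verbalSubgroup_le W f) ?_
  rw [verbalSubgroup, Subgroup.closure_le]
  rintro _ ⟨w, hw, g, rfl⟩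
  refine ⟨_, Subgroup.subset_closure ⟨w, hw, Function.surjInv hf ∘ g, rfl⟩, ?_⟩
  rw [f.apply_freeGroupLift, ← Function.comp_assoc, (Function.rightInverse_surjInv hf).comp_eq_id,
    Function.id_comp]

end Verbal

namespace Monoid.Coprod

variable {A B A' B' : Type*} [Group A] [Group B] [Group A'] [Group B']

theorem map_surjective {f : A →* A'} {g : B →* B'} (hf : Function.Surjective f)
    (hg : Function.Surjective g) : Function.Surjective (map f g) := by
  rw [← MonoidHom.range_eq_top, range_eq, map_comp_inl, map_comp_inr, MonoidHom.range_comp,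
    MonoidHom.range_comp, MonoidHom.range_eq_top.2 hf, MonoidHom.range_eq_top.2 hg,
    ← MonoidHom.range_eq_map, ← MonoidHom.range_eq_map, range_inl_sup_range_inr]

theorem toProd_map (f : A →* A') (g : B →* B') (x : A ∗ B) :
    toProd (map f g x) = f.prodMap g (toProd x) :=
  DFunLike.congr_fun (f := toProd.comp (map f g)) (g := (f.prodMap g).comp toProd)
    (by ext <;> simp [toProd_apply_inl, toProd_apply_inr]) x

def ofProd (p : A × B) : A ∗ B := inl p.1 * inr p.2

theorem toProd_ofProd (p : A × B) : toProd (ofProd p) = p := by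
  simp [ofProd, toProd_apply_inl, toProd_apply_inr]

theorem map_ofProd (f : A →* A') (g : B →* B') (p : A × B) :
    map f g (ofProd p) = ofProd (f.prodMap g p) := by
  simp [ofProd]

theorem ofProd_one : ofProd (1 : A × B) = 1 := by simp [ofProd]

end Monoid.Coprod

section FreeProduct

open Monoid.Coprod

variable {A B A' B' : Type*} [Group A] [Group B] [Group A'] [Group B']

theorem commSubgroup_eq_commutator :
    commSubgroup A B = ⁅(inl : A →* A ∗ B).range, (inr : B →* A ∗ B).range⁆ := by
  rw [commSubgroup, Subgroup.commutator_def]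
  congr 1
  ext x
  constructor
  · rintro ⟨a, b, rfl⟩
    exact ⟨_, ⟨a, rfl⟩, _, ⟨b, rfl⟩, rfl⟩
  · rintro ⟨_, ⟨a, rfl⟩, _, ⟨b, rfl⟩, rfl⟩
    exact ⟨a, b, rfl⟩

instance commSubgroup_normal : (commSubgroup A B).Normal := by
  rw [← Subgroup.normalizer_eq_top_iff, eq_top_iff, ← range_inl_sup_range_inr,
    commSubgroup_eq_commutator]
  exact sup_le (Subgroup.normalizer_commutator_ge_left _ _)
    (Subgroup.normalizer_commutator_ge_right _ _)

theorem commSubgroup_eq_ker_toProd : commSubgroup A B = (toProd : A ∗ B →* A × B).ker := by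
  refine le_antisymm ?_ ?_
  · rw [commSubgroup, Subgroup.closure_le]
    rintro _ ⟨a, b, rfl⟩
    simp [toProd_apply_inl, toProd_apply_inr, commutatorElement_def]
  · intro x hx
    let q := QuotientGroup.mk' (commSubgroup A B)
    -- modulo `[A,B]` the images of `A` and `B` commute, so `q` factors through `A × B`
    have hcomm (a : A) (b : B) : Commute (q.comp inl a) (q.comp inr b) := by
      rw [← commutatorElement_eq_one_iff_commute, MonoidHom.comp_apply, MonoidHom.comp_apply,
        ← map_commutatorElement, QuotientGroup.mk'_apply, QuotientGroup.eq_one_iff]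
      exact Subgroup.subset_closure ⟨a, b, rfl⟩
    have hq : ((q.comp inl).noncommCoprod (q.comp inr) hcomm).comp toProd = q := by
      ext <;> simp [toProd_apply_inl, toProd_apply_inr]
    suffices q x = 1 from (QuotientGroup.eq_one_iff x).1 this
    rw [← hq, MonoidHom.comp_apply, MonoidHom.mem_ker.1 hx, map_one]

theorem ofProd_toProd_mem_verbalSubgroup (W : Set (FreeGroup ℕ)) {y : A ∗ B}
    (hy : y ∈ verbalSubgroup W (A ∗ B)) : ofProd (toProd y) ∈ verbalSubgroup W (A ∗ B) := by
  rw [ofProd, fst_toProd, snd_toProd]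
  exact mul_mem (map_verbalSubgroup_le W (inl.comp fst) ⟨y, hy, rfl⟩)
    (map_verbalSubgroup_le W (inr.comp snd) ⟨y, hy, rfl⟩)

theorem map_verbalSubgroup_inf_ker_toProd (W : Set (FreeGroup ℕ)) {f : A →* A'} {g : B →* B'}
    (hf : Function.Surjective f) (hg : Function.Surjective g) :
    (verbalSubgroup W (A ∗ B) ⊓ toProd.ker).map (map f g) =
      verbalSubgroup W (A' ∗ B') ⊓ toProd.ker := by
  refine le_antisymm
    ((Subgroup.map_inf_le _ _ _).trans (inf_le_inf (map_verbalSubgroup_le W _) ?_)) ?_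
  · rintro _ ⟨y, hy, rfl⟩
    rw [MonoidHom.mem_ker, toProd_map, MonoidHom.mem_ker.1 hy, map_one]
  · rintro _ ⟨hxV, hxK⟩
    rw [← map_verbalSubgroup W (map_surjective hf hg)] at hxV
    obtain ⟨y, hyV, rfl⟩ := hxV
    refine ⟨(ofProd (toProd y))⁻¹ * y,
      Subgroup.mem_inf.2 ⟨mul_mem (inv_mem (ofProd_toProd_mem_verbalSubgroup W hyV)) hyV,
        by simp [toProd_ofProd]⟩, ?_⟩
    rw [map_mul, map_inv, map_ofProd, ← toProd_map, MonoidHom.mem_ker.1 hxK, ofProd_one, inv_one,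
      one_mul]

end FreeProduct

/-- The natural homomorphism `φ : A ∗ B → (A/M) ∗ (B/N)` maps `W(A ∗ B) ∩ [A,B]` onto
`W((A/M) ∗ (B/N)) ∩ [A/M, B/N]`. -/
theorem map_verbal_inf_comm {A B : Type*} [Group A] [Group B] (W : Set (FreeGroup ℕ))
    (M : Subgroup A) (N : Subgroup B) [M.Normal] [N.Normal] :
    (verbalSubgroup W (Coprod A B) ⊓ commSubgroup A B).map
        (Coprod.map (QuotientGroup.mk' M) (QuotientGroup.mk' N)) =
      verbalSubgroup W (Coprod (A ⧸ M) (B ⧸ N)) ⊓ commSubgroup (A ⧸ M) (B ⧸ N) := by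
  rw [commSubgroup_eq_ker_toProd, commSubgroup_eq_ker_toProd]
  exact map_verbalSubgroup_inf_ker_toProd W (QuotientGroup.mk'_surjective M)
    (QuotientGroup.mk'_surjective N)
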